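/- arXiv:2304.04178 — 7 statements merged into one kernel-verified Lean document; each statement's English description precedes it below -/
import Mathlib

section
/- Let (A, μ, α) be a Hom-associative algebra over a field k of characteristic 0, i.e. A is a k-vector space with a bilinear multiplication a·b = μ(a,b) and a linear map α : A → A satisfying α(a·b) = α(a)·α(b) and α(a)·(b·c) = (a·b)·α(c) for all a,b,c ∈ A. Then (A, [·,·], α) with the commutator bracket [a,b] := a·b − b·a is a Hom-Lie algebra. -/
/-- A two-argument map that is linear in each argument separately. -/
def IsBilin (k : Type*) [Field k] {M N P : Type*}
    [AddCommGroup M] [Module k M] [AddCommGroup N] [Module k N]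
    [AddCommGroup P] [Module k P] (f : M → N → P) : Prop :=
  (∀ x, IsLinearMap k (f x)) ∧ (∀ y, IsLinearMap k (fun x => f x y))

/-- A Hom-Lie algebra structure: a skew-symmetric bilinear bracket `B` and a linear
twist map `α` satisfying multiplicativity and the Hom-Jacobi identity. -/
def IsHomLie (k : Type*) [Field k] {g : Type*} [AddCommGroup g] [Module k g]
    (B : g → g → g) (α : g → g) : Prop :=
  IsLinearMap k α ∧ IsBilin k B ∧
  (∀ x y, B x y = - B y x) ∧
  (∀ x y, α (B x y) = B (α x) (α y)) ∧
  (∀ x y z, B (α x) (B y z) + B (α y) (B z x) + B (α z) (B x y) = 0)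

/-- A representation `(V, ρ, β)` of the Hom-Lie algebra `(g, B, α)`. -/
def IsHomLieRep (k : Type*) [Field k] {g V : Type*} [AddCommGroup g] [Module k g]
    [AddCommGroup V] [Module k V]
    (B : g → g → g) (α : g → g) (ρ : g → V → V) (β : V → V) : Prop :=
  IsLinearMap k β ∧ IsBilin k ρ ∧
  (∀ x v, β (ρ x v) = ρ (α x) (β v)) ∧
  (∀ x y v, ρ (α x) (ρ y v) - ρ (α y) (ρ x v) = ρ (B x y) (β v))

/-- An embedding tensor `T : V → g` on the Hom-Lie algebra `(g, B, α)` with respect to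
the representation `(V, ρ, β)`. -/
def IsEmbTensor (k : Type*) [Field k] {g V : Type*} [AddCommGroup g] [Module k g]
    [AddCommGroup V] [Module k V]
    (B : g → g → g) (α : g → g) (ρ : g → V → V) (β : V → V) (T : V → g) : Prop :=
  IsLinearMap k T ∧ (∀ v, α (T v) = T (β v)) ∧
  (∀ u v, B (T u) (T v) = T (ρ (T u) v))

/-- A Hom-Leibniz algebra structure: a bilinear bracket `L` and a linear twist `α`
satisfying multiplicativity and the Hom-Leibniz identity. -/
def IsHomLeibniz (k : Type*) [Field k] {H : Type*} [AddCommGroup H] [Module k H]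
    (L : H → H → H) (α : H → H) : Prop :=
  IsLinearMap k α ∧ IsBilin k L ∧
  (∀ x y, α (L x y) = L (α x) (α y)) ∧
  (∀ x y z, L (α x) (L y z) = L (L x y) (α z) + L (α y) (L x z))

/-- A representation of the Hom-Leibniz algebra `(H, L, α)` on `(W, γ)` via left and
right actions `ρL`, `ρR`. -/
def IsHomLeibnizRep (k : Type*) [Field k] {H W : Type*} [AddCommGroup H] [Module k H]
    [AddCommGroup W] [Module k W]
    (L : H → H → H) (α : H → H)
    (ρL : H → W → W) (ρR : W → H → W) (γ : W → W) : Prop :=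
  IsLinearMap k γ ∧ IsBilin k ρL ∧ IsBilin k ρR ∧
  (∀ x w, γ (ρL x w) = ρL (α x) (γ w)) ∧
  (∀ x w, γ (ρR w x) = ρR (γ w) (α x)) ∧
  (∀ x y w, ρL (α x) (ρL y w) = ρL (L x y) (γ w) + ρL (α y) (ρL x w)) ∧
  (∀ x y w, ρL (α x) (ρR w y) = ρR (ρL x w) (α y) + ρR (γ w) (L x y)) ∧
  (∀ x y w, ρR (γ w) (L x y) = ρR (ρR w x) (α y) + ρL (α x) (ρR w y))

theorem IsLinearMap.sub {R M P : Type*} [Semiring R] [AddCommGroup M] [Module R M]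
    [AddCommGroup P] [Module R P] {f g : M → P} (hf : IsLinearMap R f) (hg : IsLinearMap R g) :
    IsLinearMap R (fun x => f x - g x) :=
  (hf.mk' f - hg.mk' g).isLinear

theorem IsLinearMap.map_sub_swap {R M : Type*} [Semiring R] [AddCommGroup M] [Module R M]
    {μ : M → M → M} {α : M → M} (hα : IsLinearMap R α)
    (hmul : ∀ a b, α (μ a b) = μ (α a) (α b)) (a b : M) :
    α (μ a b - μ b a) = μ (α a) (α b) - μ (α b) (α a) := by
  rw [hα.map_sub, hmul, hmul]

section Commutator

variable {k M : Type*} [Field k] [AddCommGroup M] [Module k M]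

theorem IsBilin.sub_swap {P : Type*} [AddCommGroup P] [Module k P] {μ : M → M → P}
    (hμ : IsBilin k μ) : IsBilin k (fun a b => μ a b - μ b a) :=
  ⟨fun a => (hμ.1 a).sub (hμ.2 a), fun b => (hμ.2 b).sub (hμ.1 b)⟩

/-- Expanded, the twelve terms cancel in pairs by Hom-associativity. -/
theorem IsBilin.homJacobi_sub_swap {μ : M → M → M} {α : M → M} (hμ : IsBilin k μ)
    (hassoc : ∀ a b c, μ (α a) (μ b c) = μ (μ a b) (α c)) (x y z : M) :
    let B := fun a b => μ a b - μ b a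
    B (α x) (B y z) + B (α y) (B z x) + B (α z) (B x y) = 0 := by
  simp only [(hμ.1 _).map_sub, (hμ.2 _).map_sub, hassoc]
  abel

end Commutator

theorem stmt1_general {k A : Type*} [Field k] [AddCommGroup A] [Module k A]
    (μ : A → A → A) (α : A → A)
    (hμ : IsBilin k μ) (hα : IsLinearMap k α)
    (hmul : ∀ a b, α (μ a b) = μ (α a) (α b))
    (hassoc : ∀ a b c, μ (α a) (μ b c) = μ (μ a b) (α c)) :
    IsHomLie k (fun a b => μ a b - μ b a) α :=
  ⟨hα, hμ.sub_swap, fun _ _ => (neg_sub _ _).symm, hα.map_sub_swap hmul,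
    hμ.homJacobi_sub_swap hassoc⟩

/-- The commutator bracket of a Hom-associative algebra `(A, μ, α)`
gives a Hom-Lie algebra `(A, [·,·], α)`. -/
theorem stmt1 {k A : Type*} [Field k] [CharZero k] [AddCommGroup A] [Module k A]
    (μ : A → A → A) (α : A → A)
    (hμ : IsBilin k μ) (hα : IsLinearMap k α)
    (hmul : ∀ a b, α (μ a b) = μ (α a) (α b))
    (hassoc : ∀ a b c, μ (α a) (μ b c) = μ (μ a b) (α c)) :
    IsHomLie k (fun a b => μ a b - μ b a) α :=
  stmt1_general μ α hμ hα hmul hassoc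
end

section
/- Let (g, [·,·], α) be a Hom-Lie algebra over a field k of characteristic 0 and (V, ρ, β) a representation of it. Then the direct sum g ⊕ V with the bracket {(x,u),(y,v)} := ([x,y], ρ(x)(v)) and the linear map α ⊕ β is a Hom-Leibniz algebra (the hemi-semidirect product). -/
/-- The hemi-semidirect product: given a Hom-Lie algebra `(g, B, α)` and
a representation `(V, ρ, β)`, the space `g × V` with bracket
`{(x,u),(y,v)} = (B x y, ρ x v)` and twist `α ⊕ β` is a Hom-Leibniz algebra. -/
theorem stmt4 {k g V : Type*} [Field k] [CharZero k] [AddCommGroup g] [Module k g]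
    [AddCommGroup V] [Module k V]
    (B : g → g → g) (α : g → g) (ρ : g → V → V) (β : V → V)
    (hLie : IsHomLie k B α) (hRep : IsHomLieRep k B α ρ β) :
    IsHomLeibniz k (fun p q : g × V => ((B p.1 q.1, ρ p.1 q.2) : g × V))
      (fun p : g × V => ((α p.1, β p.2) : g × V)) := by
  obtain ⟨hα, ⟨hB1, hB2⟩, hskew, hmult, hjac⟩ := hLie
  obtain ⟨hβ, ⟨hρ1, hρ2⟩, hcomm, hrep⟩ := hRep
  refine ⟨⟨?_, ?_⟩, ⟨fun p => ⟨?_, ?_⟩, fun q => ⟨?_, ?_⟩⟩, ?_, ?_⟩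
  · intro p q; simp [hα.map_add, hβ.map_add, Prod.ext_iff]
  · intro c p; simp [hα.map_smul, hβ.map_smul, Prod.ext_iff]
  · intro q r; simp [(hB1 _).map_add, (hρ1 _).map_add, Prod.ext_iff]
  · intro c q; simp [(hB1 _).map_smul, (hρ1 _).map_smul, Prod.ext_iff]
  · intro p r; simp [(hB2 _).map_add, (hρ2 _).map_add, Prod.ext_iff]
  · intro c p; simp [(hB2 _).map_smul, (hρ2 _).map_smul, Prod.ext_iff]
  · intro p q; simp [hmult, hcomm, Prod.ext_iff]
  · intro p q r
    refine Prod.ext ?_ ?_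
    · show B (α p.1) (B q.1 r.1) =
        B (B p.1 q.1) (α r.1) + B (α q.1) (B p.1 r.1)
      have h := hjac p.1 q.1 r.1
      have e1 : B (α r.1) (B p.1 q.1) = - B (B p.1 q.1) (α r.1) := hskew _ _
      have e2 : B (α q.1) (B r.1 p.1) = - B (α q.1) (B p.1 r.1) := by
        rw [hskew r.1 p.1, (hB1 (α q.1)).map_neg]
      linear_combination (norm := abel) h - e1 - e2
    · show ρ (α p.1) (ρ q.1 r.2) =
        ρ (B p.1 q.1) (β r.2) + ρ (α q.1) (ρ p.1 r.2)
      have h := hrep p.1 q.1 r.2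
      linear_combination (norm := abel) h
end

section
/- Let (g, [·,·], α) be a Hom-Lie algebra over a field k of characteristic 0 and (V, ρ, β) a representation of it. A linear map T : V → g is an embedding tensor if and only if its graph Gr(T) = { (T(u), u) : u ∈ V } ⊆ g ⊕ V is a Hom-Leibniz subalgebra of the hemi-semidirect product, i.e. Gr(T) is invariant under α ⊕ β and closed under the bracket {(x,u),(y,v)} = ([x,y], ρ(x)(v)). -/
/-- A linear map `T : V → g` is an embedding tensor if and only if its
graph `Gr(T) = {(T u, u) : u ∈ V} ⊆ g × V` is a Hom-Leibniz subalgebra of the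
hemi-semidirect product, i.e. `Gr(T)` is invariant under `α ⊕ β` and closed under the
bracket `{(x,u),(y,v)} = (B x y, ρ x v)`. -/
theorem stmt11 {k g V : Type*} [Field k] [CharZero k] [AddCommGroup g] [Module k g]
    [AddCommGroup V] [Module k V]
    (B : g → g → g) (α : g → g) (ρ : g → V → V) (β : V → V) (T : V → g)
    (hLie : IsHomLie k B α) (hRep : IsHomLieRep k B α ρ β)
    (hT : IsLinearMap k T) :
    IsEmbTensor k B α ρ β T ↔
      ((∀ p ∈ Set.range (fun u : V => ((T u, u) : g × V)),
          ((α p.1, β p.2) : g × V) ∈ Set.range (fun u : V => ((T u, u) : g × V))) ∧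
       (∀ p ∈ Set.range (fun u : V => ((T u, u) : g × V)),
        ∀ q ∈ Set.range (fun u : V => ((T u, u) : g × V)),
          ((B p.1 q.1, ρ p.1 q.2) : g × V) ∈
            Set.range (fun u : V => ((T u, u) : g × V)))) := by
  constructor
  · rintro ⟨-, h1, h2⟩
    constructor
    · rintro p ⟨u, rfl⟩
      exact ⟨β u, by simp [(h1 u).symm]⟩
    · rintro p ⟨u, rfl⟩ q ⟨v, rfl⟩
      exact ⟨ρ (T u) v, by simp [(h2 u v).symm]⟩
  · rintro ⟨h1, h2⟩
    refine ⟨hT, ?_, ?_⟩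
    · intro v
      obtain ⟨w, hw⟩ := h1 (T v, v) ⟨v, rfl⟩
      have h1' := congrArg Prod.fst hw
      have h2' := congrArg Prod.snd hw
      simp at h1' h2'
      rw [← h1', h2']
    · intro u v
      obtain ⟨w, hw⟩ := h2 (T u, u) ⟨u, rfl⟩ (T v, v) ⟨v, rfl⟩
      have h1' := congrArg Prod.fst hw
      have h2' := congrArg Prod.snd hw
      simp at h1' h2'
      rw [← h1', h2']
end

section
/- Let T : V → g be an embedding tensor on a Hom-Lie algebra (g, [·,·], α) over a field k of characteristic 0 with respect to a representation (V, ρ, β). Then (V, {·,·}, β) is a Hom-Leibniz algebra, where {u,v} := ρ(T(u))(v) for u,v ∈ V (the induced Hom-Leibniz algebra). -/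
/-- If `T : V → g` is an embedding tensor, then `(V, {u,v} = ρ (T u) v, β)`
is a Hom-Leibniz algebra (the induced Hom-Leibniz algebra). -/
theorem stmt12 {k g V : Type*} [Field k] [CharZero k] [AddCommGroup g] [Module k g]
    [AddCommGroup V] [Module k V]
    (B : g → g → g) (α : g → g) (ρ : g → V → V) (β : V → V) (T : V → g)
    (hLie : IsHomLie k B α) (hRep : IsHomLieRep k B α ρ β)
    (hT : IsEmbTensor k B α ρ β T) :
    IsHomLeibniz k (fun u v : V => ρ (T u) v) β := by
  obtain ⟨hβ, ⟨hρ1, hρ2⟩, hcomm, hjac⟩ := hRep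
  obtain ⟨hTlin, hTα, hTB⟩ := hT
  refine ⟨hβ, ⟨fun u => hρ1 (T u), fun v => ?_⟩, fun u v => ?_, fun u v w => ?_⟩
  · constructor
    · intro a b; show ρ (T (a + b)) v = _; rw [hTlin.map_add]; exact (hρ2 v).map_add _ _
    · intro c a; show ρ (T (c • a)) v = _; rw [hTlin.map_smul]; exact (hρ2 v).map_smul _ _
  · show β (ρ (T u) v) = ρ (T (β u)) (β v)
    rw [hcomm, hTα]
  · show ρ (T (β u)) (ρ (T v) w) = ρ (T (ρ (T u) v)) (β w) + ρ (T (β v)) (ρ (T u) w)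
    have h := hjac (T u) (T v) w
    rw [hTα, hTα, hTB] at h
    rw [← h]; abel
end

section
/- Let T : V → g be an embedding tensor on a Hom-Lie algebra (g, [·,·], α) over a field k of characteristic 0 with respect to a representation (V, ρ, β), and let (V, {·,·}, β) be the induced Hom-Leibniz algebra with {u,v} = ρ(T(u))(v). Define ρ̄ᴸ : V × g → g by ρ̄ᴸ(v,x) = [T(v), x] and ρ̄ᴿ : g × V → g by ρ̄ᴿ(x,v) = [x, T(v)] − T(ρ(x)(v)). Then (g, ρ̄ᴸ, ρ̄ᴿ, α) is a representation of the Hom-Leibniz algebra (V, {·,·}, β). -/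
/-- For an embedding tensor `T`, the maps `ρ̄ᴸ(v,x) = [T v, x]` and
`ρ̄ᴿ(x,v) = [x, T v] − T (ρ x v)` make `(g, α)` a representation of the induced
Hom-Leibniz algebra `(V, {u,v} = ρ (T u) v, β)`. -/
theorem stmt13 {k g V : Type*} [Field k] [CharZero k] [AddCommGroup g] [Module k g]
    [AddCommGroup V] [Module k V]
    (B : g → g → g) (α : g → g) (ρ : g → V → V) (β : V → V) (T : V → g)
    (hLie : IsHomLie k B α) (hRep : IsHomLieRep k B α ρ β)
    (hT : IsEmbTensor k B α ρ β T) :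
    IsHomLeibnizRep k (fun u v : V => ρ (T u) v) β
      (fun (v : V) (x : g) => B (T v) x)
      (fun (x : g) (v : V) => B x (T v) - T (ρ x v))
      α := by
  obtain ⟨hα, hBbil, hskew, hmult, hjac⟩ := hLie
  obtain ⟨hβ, hρbil, hcomm, hrep⟩ := hRep
  obtain ⟨hTlin, hTa, hTe⟩ := hT
  -- derived form of the Hom-Jacobi identity
  have jac' : ∀ a b c, B (α a) (B b c) = B (α b) (B a c) + B (B a b) (α c) := by
    intro a b c
    have h := hjac a b c
    have h1 : B (α b) (B c a) = - B (α b) (B a c) := by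
      rw [hskew c a, (hBbil.1 (α b)).map_neg]
    have h2 : B (α c) (B a b) = - B (B a b) (α c) := hskew (α c) (B a b)
    rw [h1, h2] at h
    linear_combination (norm := abel) h
  -- derived rep identity
  have rep' : ∀ a b w, ρ (α a) (ρ b w) = ρ (B a b) (β w) + ρ (α b) (ρ a w) := by
    intro a b w
    have h := hrep a b w
    linear_combination (norm := abel) h
  refine ⟨hα, ⟨fun v => hBbil.1 (T v), ?_⟩, ⟨?_, ?_⟩, ?_, ?_, ?_, ?_, ?_⟩
  · intro x
    exact ⟨fun u v => by simp only [hTlin.map_add, (hBbil.2 x).map_add],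
           fun c v => by simp only [hTlin.map_smul, (hBbil.2 x).map_smul]⟩
  · intro x
    exact ⟨fun u v => by
            simp only [hTlin.map_add, (hBbil.1 x).map_add, (hρbil.1 x).map_add]; abel,
           fun c v => by
            simp only [hTlin.map_smul, (hBbil.1 x).map_smul, (hρbil.1 x).map_smul,
              smul_sub]⟩
  · intro v
    exact ⟨fun x y => by
            simp only [(hBbil.2 (T v)).map_add, (hρbil.2 v).map_add, hTlin.map_add]; abel,
           fun c x => by
            simp only [(hBbil.2 (T v)).map_smul, (hρbil.2 v).map_smul, hTlin.map_smul,
              smul_sub]⟩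
  · intro v x
    dsimp only
    rw [hmult, hTa]
  · intro x v
    dsimp only
    rw [hα.map_sub, hmult, hTa x, hTa (ρ v x), hcomm]
  · intro u v x
    dsimp only
    rw [← hTa u, ← hTa v, ← hTe u v, jac' (T u) (T v) x]
    abel
  · intro u v x
    have e1 : B (T (β u)) (B x (T v)) =
        B (α x) (B (T u) (T v)) + B (B (T u) x) (α (T v)) := by
      rw [← hTa u]; exact jac' (T u) x (T v)
    have e2 : B (T (β u)) (T (ρ x v)) = T (ρ (B (T u) x) (β v) + ρ (α x) (ρ (T u) v)) := by
      rw [hTe, ← hTa u, rep' (T u) x v]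
    dsimp only
    rw [(hBbil.1 (T (β u))).map_sub, e1, e2, hTa v, hTe u v, hTlin.map_add]
    abel
  · intro u v x
    have e1 : B (α x) (B (T u) (T v)) =
        B (α (T u)) (B x (T v)) + B (B x (T u)) (α (T v)) := jac' x (T u) (T v)
    have e2 : T (ρ (α x) (ρ (T u) v)) =
        T (ρ (B x (T u)) (β v)) + T (ρ (α (T u)) (ρ x v)) := by
      rw [rep' x (T u) v, hTlin.map_add]
    have e3 : B (α (T u)) (T (ρ x v)) = T (ρ (α (T u)) (ρ x v)) := by
      rw [hTa u, hTe (β u) (ρ x v), ← hTa u]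
    dsimp only
    rw [← hTe u v, (hBbil.2 (T (β v))).map_sub, (hρbil.2 (β v)).map_sub, hTlin.map_sub,
      (hBbil.1 (T (β u))).map_sub, e1, e2, hTe (ρ x u) (β v), ← hTa u, ← hTa v, e3]
    abel
end

section
/- Let T : V → g be an embedding tensor on a Hom-Lie algebra (g, [·,·], α) over a field k of characteristic 0 with respect to a representation (V, ρ, β), and let T₁ : V → g be a linear map with α∘T₁ = T₁∘β. Then T + T₁ is an embedding tensor if and only if for all u,v ∈ V: [T₁(u), T(v)] + [T(u), T₁(v)] + [T₁(u), T₁(v)] = T(ρ(T₁(u))(v)) + T₁(ρ(T(u))(v)) + T₁(ρ(T₁(u))(v)) (i.e. T₁ is a Maurer-Cartan element of the differential graded Lie algebra controlling deformations of T). -/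
/-- For an embedding tensor `T` and a linear map `T₁` with `α∘T₁ = T₁∘β`,
the sum `T + T₁` is an embedding tensor if and only if `T₁` satisfies the Maurer-Cartan
equation of the controlling differential graded Lie algebra. -/
theorem stmt15 {k g V : Type*} [Field k] [CharZero k] [AddCommGroup g] [Module k g]
    [AddCommGroup V] [Module k V]
    (B : g → g → g) (α : g → g) (ρ : g → V → V) (β : V → V) (T T₁ : V → g)
    (hLie : IsHomLie k B α) (hRep : IsHomLieRep k B α ρ β)
    (hT : IsEmbTensor k B α ρ β T)
    (hT₁ : IsLinearMap k T₁)
    (hT₁α : ∀ v, α (T₁ v) = T₁ (β v)) :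
    IsEmbTensor k B α ρ β (fun v => T v + T₁ v) ↔
      (∀ u v, B (T₁ u) (T v) + B (T u) (T₁ v) + B (T₁ u) (T₁ v) =
        T (ρ (T₁ u) v) + T₁ (ρ (T u) v) + T₁ (ρ (T₁ u) v)) := by
  obtain ⟨hTlin, hTα, hTeq⟩ := hT
  obtain ⟨hαlin, ⟨hB1, hB2⟩, hskew, hmult, hjac⟩ := hLie
  obtain ⟨hβlin, ⟨hρ1, hρ2⟩, hβρ, hρeq⟩ := hRep
  have key : ∀ u v, B (T u + T₁ u) (T v + T₁ v) =
      B (T u) (T v) + (B (T₁ u) (T v) + B (T u) (T₁ v) + B (T₁ u) (T₁ v)) := by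
    intro u v
    rw [(hB2 _).map_add, (hB1 _).map_add, (hB1 _).map_add]
    abel
  have key2 : ∀ u v, T (ρ (T u + T₁ u) v) + T₁ (ρ (T u + T₁ u) v) =
      T (ρ (T u) v) + (T (ρ (T₁ u) v) + T₁ (ρ (T u) v) + T₁ (ρ (T₁ u) v)) := by
    intro u v
    rw [(hρ2 _).map_add, hTlin.map_add, hT₁.map_add]
    abel
  constructor
  · rintro ⟨_, _, heq⟩ u v
    have := heq u v
    simp only [key, key2, hTeq] at this
    exact add_left_cancel this
  · intro hmc
    refine ⟨⟨fun x y => by rw [hTlin.map_add, hT₁.map_add]; abel,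
      fun c x => by rw [hTlin.map_smul, hT₁.map_smul, smul_add]⟩,
      fun v => by rw [hαlin.map_add, hTα, hT₁α],
      fun u v => ?_⟩
    simp only [key, key2, hTeq, hmc]
end

section
/- Let T : V → g be an embedding tensor on a Hom-Lie algebra (g, [·,·], α) over a field k of characteristic 0 with respect to a representation (V, ρ, β), and let T₁ : V → g be a linear map with α∘T₁ = T₁∘β. Then T + εT₁ is an infinitesimal deformation of T, i.e. an embedding tensor over k[ε]/(ε²) for the ε-linear extensions of [·,·], ρ, α, β, if and only if T₁ is a 1-cocycle: [T(u), T₁(v)] + [T₁(u), T(v)] = T(ρ(T₁(u))(v)) + T₁(ρ(T(u))(v)) for all u,v ∈ V. -/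
/-- `T + εT₁` is an infinitesimal deformation of the embedding tensor `T`,
i.e. an embedding tensor over `k[ε]/(ε²)` for the ε-linear extensions (encoded on pairs
`(x, x') = x + εx'` with extended structure maps `Bε`, `ρε`, `Tε`), if and only if `T₁`
is a 1-cocycle: `[T u, T₁ v] + [T₁ u, T v] = T (ρ (T₁ u) v) + T₁ (ρ (T u) v)`. -/
theorem stmt17 {k g V : Type*} [Field k] [CharZero k] [AddCommGroup g] [Module k g]
    [AddCommGroup V] [Module k V]
    (B : g → g → g) (α : g → g) (ρ : g → V → V) (β : V → V) (T T₁ : V → g)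
    (hLie : IsHomLie k B α) (hRep : IsHomLieRep k B α ρ β)
    (hT : IsEmbTensor k B α ρ β T)
    (hT₁ : IsLinearMap k T₁)
    (hT₁α : ∀ v, α (T₁ v) = T₁ (β v))
    -- the ε-linear extensions of the structure maps to pairs `x + εx'`:
    (Bε : g × g → g × g → g × g)
    (hBε : ∀ p q, Bε p q = (B p.1 q.1, B p.1 q.2 + B p.2 q.1))
    (ρε : g × g → V × V → V × V)
    (hρε : ∀ p u, ρε p u = (ρ p.1 u.1, ρ p.1 u.2 + ρ p.2 u.1))
    (Tε : V × V → g × g)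
    (hTε : ∀ u, Tε u = (T u.1, T₁ u.1 + T u.2)) :
    ((∀ u : V × V, ((α (Tε u).1, α (Tε u).2) : g × g) = Tε (β u.1, β u.2)) ∧
     (∀ u v : V × V, Bε (Tε u) (Tε v) = Tε (ρε (Tε u) v))) ↔
      (∀ u v, B (T u) (T₁ v) + B (T₁ u) (T v) =
        T (ρ (T₁ u) v) + T₁ (ρ (T u) v)) := by
  obtain ⟨hα, hB, _, _, _⟩ := hLie
  obtain ⟨hβ, hρ, _, _⟩ := hRep
  obtain ⟨hTlin, hTα, hTB⟩ := hT
  constructor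
  · rintro ⟨-, h2⟩ u v
    have := h2 (u, 0) (v, 0)
    simp only [hBε, hρε, hTε, Prod.mk.injEq] at this
    simp only [hTlin.map_zero, hT₁.map_zero, add_zero,
      (hB.1 _).map_zero, (hρ.1 _).map_zero, zero_add] at this
    linear_combination (norm := abel) this.2
  · intro hc
    constructor
    · intro u
      simp only [hTε, Prod.mk.injEq, hα.map_add, hTα, hT₁α]
    · intro u v
      simp only [hBε, hρε, hTε, Prod.mk.injEq]
      refine ⟨hTB _ _, ?_⟩
      rw [(hB.1 _).map_add, (hB.2 _).map_add, (hρ.2 _).map_add,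
        hTlin.map_add, hTlin.map_add, hTB, hTB]
      linear_combination (norm := abel) hc u.1 v.1
end
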